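/- arXiv:0906.5213 — 7 statements merged into one kernel-verified Lean document; each statement's English description precedes it below -/
import Mathlib

section
/- If R is a commutative ring and M and N are flat Mittag-Leffler R-modules, then the tensor product M ⊗_R N is a flat Mittag-Leffler R-module. -/
open TensorProduct

/-- `M` is a Mittag-Leffler `R`-module: for every family `(N i)` of `R`-modules, the
canonical map `M ⊗[R] (∀ i, N i) → ∀ i, M ⊗[R] N i` is injective. -/
def IsMittagLeffler (R M : Type) [CommRing R] [AddCommGroup M] [Module R M] : Prop :=
  ∀ (ι : Type) (N : ι → Type) [∀ i, AddCommGroup (N i)] [∀ i, Module R (N i)],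
    Function.Injective (TensorProduct.piRightHom R R M N)

/- Up to the associator, the comparison map of `M ⊗ N` factors as `id_M ⊗` (the comparison map
of `N`) followed by the comparison map of `M`; flatness of `M` keeps the first factor injective. -/

theorem TensorProduct.piCongrRight_assoc_comp_piRightHom (R M N : Type*) [CommRing R]
    [AddCommGroup M] [Module R M] [AddCommGroup N] [Module R N]
    {ι : Type*} (P : ι → Type*) [∀ i, AddCommGroup (P i)] [∀ i, Module R (P i)] :
    (LinearEquiv.piCongrRight fun i => TensorProduct.assoc R M N (P i)).toLinearMap ∘ₗ
        piRightHom R R (M ⊗[R] N) P =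
      piRightHom R R M (fun i => N ⊗[R] P i) ∘ₗ (piRightHom R R N P).lTensor M ∘ₗ
        (TensorProduct.assoc R M N (∀ i, P i)).toLinearMap := by
  refine TensorProduct.ext_threefold fun m n p => ?_
  ext i
  simp [piRightHom_tmul]

theorem IsMittagLeffler.tensorProduct {R M N : Type} [CommRing R]
    [AddCommGroup M] [Module R M] [AddCommGroup N] [Module R N] [Module.Flat R M]
    (hM : IsMittagLeffler R M) (hN : IsMittagLeffler R N) :
    IsMittagLeffler R (M ⊗[R] N) := by
  intro ι P _ _
  have hfactor := congrArg DFunLike.coe (piCongrRight_assoc_comp_piRightHom R M N P)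
  simp only [LinearMap.coe_comp, LinearEquiv.coe_coe] at hfactor
  refine Function.Injective.of_comp
    (f := LinearEquiv.piCongrRight fun i => TensorProduct.assoc R M N (P i)) ?_
  rw [hfactor]
  exact (hM ι fun i => N ⊗[R] P i).comp <|
    (Module.Flat.lTensor_preserves_injective_linearMap _ (hN ι P)).comp
      (TensorProduct.assoc R M N (∀ i, P i)).injective

/-- If `M` and `N` are flat Mittag-Leffler modules over a commutative ring `R`,
then `M ⊗[R] N` is a flat Mittag-Leffler module. -/
theorem flat_mittagLeffler_tensor (R M N : Type) [CommRing R]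
    [AddCommGroup M] [Module R M] [AddCommGroup N] [Module R N]
    (hMflat : Module.Flat R M) (hMml : IsMittagLeffler R M)
    (hNflat : Module.Flat R N) (hNml : IsMittagLeffler R N) :
    Module.Flat R (M ⊗[R] N) ∧ IsMittagLeffler R (M ⊗[R] N) :=
  ⟨inferInstance, hMml.tensorProduct hNml⟩
end

section
/- If R is a commutative ring, M is a Mittag-Leffler R-module and N is a flat Mittag-Leffler R-module, then M ⊗_R N is Mittag-Leffler. -/
open TensorProduct

/-! Up to the isomorphisms `(M ⊗ N) ⊗ Q ≅ N ⊗ (M ⊗ Q)`, the canonical map for `M ⊗ N` is the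
composite `N ⊗ (M ⊗ ∏ P) → N ⊗ ∏ (M ⊗ P) → ∏ N ⊗ (M ⊗ P)`: the first map is injective since
`M` is Mittag-Leffler and `N` is flat, the second since `N` is Mittag-Leffler. -/

namespace TensorProduct

variable {R M N ι : Type*} [CommSemiring R] [AddCommMonoid M] [Module R M]
  [AddCommMonoid N] [Module R N] {P : ι → Type*} [∀ i, AddCommMonoid (P i)]
  [∀ i, Module R (P i)]

variable (R M N) in
def assocLeftComm (Q : Type*) [AddCommMonoid Q] [Module R Q] :
    (M ⊗[R] N) ⊗[R] Q ≃ₗ[R] N ⊗[R] (M ⊗[R] Q) :=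
  (TensorProduct.assoc R M N Q).trans (leftComm R M N Q)

theorem piCongrRight_assocLeftComm_comp_piRightHom :
    (LinearEquiv.piCongrRight fun i ↦ assocLeftComm R M N (P i)).toLinearMap ∘ₗ
        piRightHom R R (M ⊗[R] N) P =
      piRightHom R R N (fun i ↦ M ⊗[R] P i) ∘ₗ (piRightHom R R M P).lTensor N ∘ₗ
        (assocLeftComm R M N (∀ i, P i)).toLinearMap := by
  apply TensorProduct.ext
  apply TensorProduct.ext
  ext m n p i
  simp [assocLeftComm]

end TensorProduct

/-- If `M` is Mittag-Leffler and `N` is flat Mittag-Leffler, then `M ⊗[R] N`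
is Mittag-Leffler. -/
theorem mittagLeffler_tensor_flat_mittagLeffler (R M N : Type) [CommRing R]
    [AddCommGroup M] [Module R M] [AddCommGroup N] [Module R N]
    (hMml : IsMittagLeffler R M)
    (hNflat : Module.Flat R N) (hNml : IsMittagLeffler R N) :
    IsMittagLeffler R (M ⊗[R] N) := by
  intro ι P _ _
  have h : Function.Injective
      (piRightHom R R N (fun i ↦ M ⊗[R] P i) ∘ₗ (piRightHom R R M P).lTensor N ∘ₗ
        (assocLeftComm R M N (∀ i, P i)).toLinearMap) :=
    (hNml ι _).comp <| (Module.Flat.lTensor_preserves_injective_linearMap _ (hMml ι P)).comp <|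
      LinearEquiv.injective _
  rw [← piCongrRight_assocLeftComm_comp_piRightHom, LinearMap.coe_comp] at h
  exact h.of_comp
end

section
/- Every finitely presented module over a ring R is Mittag-Leffler. -/
/-!
Choose a presentation `Rᵐ → Rⁿ → M → 0` and compare, for a family `(N i)`, the two right exact
rows `Rᵐ ⊗ ∏ N i → Rⁿ ⊗ ∏ N i → M ⊗ ∏ N i → 0` and `∏ (Rᵐ ⊗ N i) → ∏ (Rⁿ ⊗ N i) → ∏ (M ⊗ N i)`
(a product of exact sequences is exact). For finite free modules the vertical maps are
isomorphisms, since there both sides are just `m`- resp. `n`-tuples; the four lemma then makes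
the vertical map at `M` injective.
-/

open TensorProduct

theorem Function.Exact.piMap {ι : Type*} {A B C : ι → Type*} [∀ i, Zero (C i)]
    {f : ∀ i, A i → B i} {g : ∀ i, B i → C i} (h : ∀ i, Function.Exact (f i) (g i)) :
    Function.Exact (Pi.map f) (Pi.map g) := by
  intro y
  simp only [funext_iff, Pi.map_apply, Pi.zero_apply, h _ _, Set.mem_range]
  exact ⟨fun hy ↦ ⟨fun i ↦ (hy i).choose, fun i ↦ (hy i).choose_spec⟩,
    fun ⟨x, hx⟩ i ↦ ⟨x i, hx i⟩⟩

namespace TensorProduct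

variable {R : Type*} [CommRing R] {ι : Type*} (N : ι → Type*)
  [∀ i, AddCommGroup (N i)] [∀ i, Module R (N i)]

theorem piRightHom_comp_rTensor {P Q : Type*} [AddCommGroup P] [Module R P]
    [AddCommGroup Q] [Module R Q] (f : P →ₗ[R] Q) :
    piRightHom R R Q N ∘ₗ f.rTensor (∀ i, N i) =
      LinearMap.piMap (fun i ↦ f.rTensor (N i)) ∘ₗ piRightHom R R P N := by
  ext p x i
  simp

theorem piRightHom_bijective_of_finite (κ : Type*) [Finite κ] :
    Function.Bijective (piRightHom R R (κ → R) N) := by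
  cases nonempty_fintype κ
  classical
  let e := TensorProduct.comm R (κ → R) (∀ i, N i) ≪≫ₗ piScalarRight R R (∀ i, N i) κ
  let e' := LinearEquiv.piCongrRight fun i ↦
    TensorProduct.comm R (κ → R) (N i) ≪≫ₗ piScalarRight R R (N i) κ
  have swap_comp : e' ∘ piRightHom R R (κ → R) N = Equiv.piComm (fun _ _ ↦ N _) ∘ e := by
    funext x i k
    induction x with
    | zero => simp [Equiv.piComm, Function.swap]
    | tmul f x => simp [e, e', Equiv.piComm, Function.swap]
    | add x y hx hy => simp_all [Equiv.piComm, Function.swap]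
  rw [← EquivLike.comp_bijective _ e', swap_comp]
  exact (Equiv.bijective _).comp e.bijective

theorem piRightHom_injective_of_exact {F₁ F₀ M : Type*} [AddCommGroup F₁] [Module R F₁]
    [AddCommGroup F₀] [Module R F₀] [AddCommGroup M] [Module R M]
    {g : F₁ →ₗ[R] F₀} {f : F₀ →ₗ[R] M} (hfg : Function.Exact g f) (hf : Function.Surjective f)
    (h₁ : Function.Surjective (piRightHom R R F₁ N))
    (h₀ : Function.Injective (piRightHom R R F₀ N)) :
    Function.Injective (piRightHom R R M N) :=
  LinearMap.injective_of_surjective_of_injective_of_right_exact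
    (g.rTensor _) (f.rTensor _) (LinearMap.piMap fun i ↦ g.rTensor (N i))
    (LinearMap.piMap fun i ↦ f.rTensor (N i)) _ _ _
    (piRightHom_comp_rTensor N g).symm (piRightHom_comp_rTensor N f).symm
    (rTensor_exact _ hfg hf) (Function.Exact.piMap fun i ↦ rTensor_exact (N i) hfg hf)
    h₁ h₀ (LinearMap.rTensor_surjective _ hf)

end TensorProduct

/-- Every finitely presented module is Mittag-Leffler. -/
theorem finitePresentation_isMittagLeffler (R M : Type) [CommRing R]
    [AddCommGroup M] [Module R M] (h : Module.FinitePresentation R M) :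
    IsMittagLeffler R M := by
  intro ι N _ _
  obtain ⟨n, m, f, g, hf, hfg⟩ := Module.FinitePresentation.exists_fin' (fp := h) R M
  exact piRightHom_injective_of_exact N hfg hf
    (piRightHom_bijective_of_finite N (Fin m)).2 (piRightHom_bijective_of_finite N (Fin n)).1
end

section
/- Every projective module over a ring R is Mittag-Leffler. -/
/-!
A free module `κ →₀ R` is Mittag-Leffler because `(κ →₀ R) ⊗ P ≃ κ →₀ P` turns the canonical map
into the evident injection `(κ →₀ ∏ N i) → ∏ (κ →₀ N i)`. A projective module is a retract of a
free one, and the canonical map is natural in the module, so the property passes to retracts.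
-/

open TensorProduct

section

variable {R : Type} [CommRing R] {ι : Type} (N : ι → Type) [∀ i, AddCommGroup (N i)]
  [∀ i, Module R (N i)]

lemma piRightHom_rTensor {M M' : Type} [AddCommGroup M] [Module R M] [AddCommGroup M']
    [Module R M'] (f : M →ₗ[R] M') (x : M ⊗[R] (∀ i, N i)) (i : ι) :
    piRightHom R R M' N (f.rTensor _ x) i = f.rTensor (N i) (piRightHom R R M N x i) := by
  induction x using TensorProduct.induction_on with
  | zero => simp
  | tmul m n => simp [piRightHom_tmul]
  | add a b ha hb => simp [ha, hb]

lemma finsuppScalarLeft_piRightHom (κ : Type) [DecidableEq κ] (x : (κ →₀ R) ⊗[R] (∀ i, N i))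
    (i : ι) (k : κ) :
    finsuppScalarLeft R (N i) κ (piRightHom R R (κ →₀ R) N x i) k
      = finsuppScalarLeft R (∀ i, N i) κ x k i := by
  induction x using TensorProduct.induction_on with
  | zero => simp
  | tmul p n => simp [piRightHom_tmul, finsuppScalarLeft_apply_tmul_apply]
  | add a b ha hb => simp [ha, hb]

end

theorem isMittagLeffler_finsupp (R κ : Type) [CommRing R] : IsMittagLeffler R (κ →₀ R) := by
  classical
  intro ι N _ _ x y hxy
  apply (finsuppScalarLeft R (∀ i, N i) κ).injective
  ext k i
  simp only [← finsuppScalarLeft_piRightHom, hxy]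

theorem IsMittagLeffler.of_retract {R M M' : Type} [CommRing R] [AddCommGroup M] [Module R M]
    [AddCommGroup M'] [Module R M'] (h : IsMittagLeffler R M') (f : M →ₗ[R] M') (g : M' →ₗ[R] M)
    (hgf : g ∘ₗ f = .id) : IsMittagLeffler R M := by
  intro ι N _ _
  have hf : Function.Injective (f.rTensor (∀ i, N i)) :=
    Function.LeftInverse.injective (g := g.rTensor _) fun x => by
      rw [← LinearMap.rTensor_comp_apply, hgf, LinearMap.rTensor_id, LinearMap.id_apply]
  refine Function.Injective.of_comp (f := fun y i => f.rTensor (N i) (y i)) ?_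
  have hcomm : (fun y i => f.rTensor (N i) (y i)) ∘ piRightHom R R M N
      = piRightHom R R M' N ∘ f.rTensor (∀ i, N i) := by
    funext x i
    exact (piRightHom_rTensor N f x i).symm
  rw [hcomm]
  exact (h ι N).comp hf

/-- Every projective module is Mittag-Leffler. -/
theorem projective_isMittagLeffler (R M : Type) [CommRing R]
    [AddCommGroup M] [Module R M] (h : Module.Projective R M) :
    IsMittagLeffler R M := by
  obtain ⟨s, hs⟩ := Module.projective_def'.mp h
  exact (isMittagLeffler_finsupp R M).of_retract s _ hs
end

section
/- No non-zero ℵ₁-free abelian group is cotorsion. -/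
/-!
Rewriting `ℚ = ⟨eₙ | eₙ = (n+1) eₙ₊₁⟩` (with `eₙ ↦ 1/n!`) gives a free resolution
`0 → ℤ^(ℕ) → ℤ^(ℕ) → ℚ → 0`. If `Ext¹(ℚ, A) = 0`, every homomorphism from the relation module
to `A` extends to the generators; extending the one sending every relation to a fixed `a ≠ 0`
yields `fₙ ∈ A` with `fₙ = a + (n+1) fₙ₊₁`. These elements generate a countable, hence free,
subgroup, and a coordinate `φ` with `φ a ≠ 0` gives integers `uₙ = m + (n+1) uₙ₊₁`, `m ≠ 0`.
Such a sequence is bounded, hence eventually `0`, which forces `m = 0`.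
-/

open CategoryTheory

/-- `Ext¹_ℤ(A, B)` in the category of abelian groups (`ℤ`-modules). -/
noncomputable abbrev ext1 (A B : ModuleCat ℤ) : Type :=
  ((Ext ℤ (ModuleCat ℤ) 1).obj (Opposite.op A)).obj B

/-- An abelian group is `ℵ₁`-free if every countably generated subgroup is free. -/
def Aleph1Free (A : Type) [AddCommGroup A] [Module ℤ A] : Prop :=
  ∀ N : Submodule ℤ A, (∃ S : Set A, S.Countable ∧ Submodule.span ℤ S = N) →
    Module.Free ℤ N

/-- An abelian group is cotorsion if `Ext¹_ℤ(ℚ, A) = 0`. -/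
def IsCotorsion (A : Type) [AddCommGroup A] : Prop :=
  Subsingleton (ext1 (ModuleCat.of ℤ ℚ) (ModuleCat.of ℤ A))

noncomputable section

open Limits ZeroObject

namespace CategoryTheory.ShortComplex

variable {C : Type*} [Category* C] [Abelian C] (S : ShortComplex C)

/-- `S.X₁ ⟶ S.X₂` placed in degrees `1` and `0`. -/
def toChainComplex : ChainComplex C ℕ :=
  ChainComplex.of (fun | 0 => S.X₂ | 1 => S.X₁ | _ + 2 => 0)
    (fun | 0 => S.f | _ + 1 => 0) fun _ => zero_comp

lemma toChainComplex_d_one_zero : S.toChainComplex.d 1 0 = S.f := by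
  dsimp only [toChainComplex]; exact ChainComplex.of_d _ _ 0

lemma toChainComplex_d_two_one : S.toChainComplex.d 2 1 = 0 := by
  dsimp only [toChainComplex]; exact ChainComplex.of_d _ _ 1

lemma isZero_toChainComplex_X (n : ℕ) : IsZero (S.toChainComplex.X (n + 2)) :=
  isZero_zero C

lemma toChainComplex_exactAt_succ (hf : Mono S.f) (n : ℕ) : S.toChainComplex.ExactAt (n + 1) := by
  rw [HomologicalComplex.exactAt_iff' _ (n + 2) (n + 1) n (by simp) (by simp)]
  match n with
  | 0 =>
    refine (ShortComplex.exact_iff_mono _ S.toChainComplex_d_two_one).2 ?_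
    change Mono (S.toChainComplex.d 1 0)
    rwa [toChainComplex_d_one_zero]
  | n + 1 => exact ShortComplex.exact_of_isZero_X₂ _ (S.isZero_toChainComplex_X n)

def toChainComplexπ : S.toChainComplex ⟶ (ChainComplex.single₀ C).obj S.X₃ :=
  (ChainComplex.toSingle₀Equiv _ _).symm ⟨S.g, by rw [toChainComplex_d_one_zero]; exact S.zero⟩

lemma toChainComplexπ_f_zero : S.toChainComplexπ.f 0 = S.g :=
  ChainComplex.toSingle₀Equiv_symm_apply_f_zero _ _

variable {S}

lemma quasiIso_toChainComplexπ (hS : S.ShortExact) : _root_.QuasiIso S.toChainComplexπ where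
  quasiIsoAt
    | 0 => by
      rw [ChainComplex.quasiIsoAt₀_iff, ShortComplex.quasiIso_iff_of_zeros' _ rfl rfl rfl]
      refine (ShortComplex.exact_and_epi_g_iff_of_iso ?_).2 ⟨hS.exact, hS.epi_g⟩
      exact ShortComplex.isoMk (Iso.refl _) (Iso.refl _) (Iso.refl _)
        (by simp [toChainComplex_d_one_zero]; erw [Category.id_comp, Category.comp_id])
        (by erw [Category.id_comp, Category.comp_id]; exact S.toChainComplexπ_f_zero.symm)
    | n + 1 => (quasiIsoAt_iff_exactAt' _ _ (ChainComplex.exactAt_succ_single_obj _ _)).2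
      (S.toChainComplex_exactAt_succ hS.mono_f n)

def ShortExact.projectiveResolution (hS : S.ShortExact) [Projective S.X₁] [Projective S.X₂] :
    ProjectiveResolution S.X₃ where
  complex := S.toChainComplex
  projective
    | 0 => ‹Projective S.X₂›
    | 1 => ‹Projective S.X₁›
    | _ + 2 => Projective.zero_projective
  π := S.toChainComplexπ
  quasiIso := S.quasiIso_toChainComplexπ hS

end CategoryTheory.ShortComplex

namespace CategoryTheory.ShortComplex.ShortExact

variable {R : Type*} [Ring R] {C : Type*} [Category* C] [Abelian C] [Linear R C]
  [EnoughProjectives C] {S : ShortComplex C}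

lemma exists_f_comp_eq_of_isZero_ext (hS : S.ShortExact) [Projective S.X₁] [Projective S.X₂]
    {Y : C} (hY : IsZero (((Ext R C 1).obj (Opposite.op S.X₃)).obj Y)) (c : S.X₁ ⟶ Y) :
    ∃ x : S.X₂ ⟶ Y, S.f ≫ x = c := by
  -- `Ext¹(S.X₃, Y)` is the homology of `Hom(S.X₂, Y) → Hom(S.X₁, Y) → Hom(0, Y)`.
  set K := hS.projectiveResolution.complex.linearYonedaObj R Y
  have hK : K.ExactAt 1 := (HomologicalComplex.exactAt_iff_isZero_homology _ _).2
    (hY.of_iso (hS.projectiveResolution.isoExt 1 Y).symm)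
  rw [HomologicalComplex.exactAt_iff' K 0 1 2 (by simp) (by simp),
    ShortComplex.moduleCat_exact_iff] at hK
  obtain ⟨x, hx⟩ := hK (show (K.sc' 0 1 2).X₂ from c)
    (IsZero.eq_of_src (S.isZero_toChainComplex_X 0) _ _)
  exact ⟨x, (congrArg (· ≫ x) S.toChainComplex_d_one_zero.symm).trans hx⟩

end CategoryTheory.ShortComplex.ShortExact

theorem Int.eq_zero_of_forall_eq_add_mul_succ {u : ℕ → ℤ} {m : ℤ}
    (h : ∀ n : ℕ, u n = m + (n + 1) * u (n + 1)) : m = 0 := by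
  have hstep (n : ℕ) : ((n : ℤ) + 1) * |u (n + 1)| ≤ |u n| + |m| := by
    have h' : u n - m = ((n : ℤ) + 1) * u (n + 1) := by rw [h n]; ring
    calc ((n : ℤ) + 1) * |u (n + 1)| = |u n - m| := by
          rw [h', abs_mul, abs_of_pos (show (0 : ℤ) < n + 1 by positivity)]
      _ ≤ |u n| + |m| := abs_sub _ _
  set B := |u 0| + |m|
  have hbound (n : ℕ) : |u n| ≤ B := by
    induction n with
    | zero => simp [B]
    | succ n ih =>
      rcases n with _ | n
      · simpa using hstep 0
      · have := hstep (n + 1)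
        push_cast at this
        nlinarith [abs_nonneg (u 0), mul_nonneg n.cast_nonneg (abs_nonneg (u (n + 2)))]
  have hvanish (n : ℕ) (hn : 2 * B < n + 1) : u (n + 1) = 0 := by
    have : ((n : ℤ) + 1) * |u (n + 1)| < (n + 1) * 1 := by
      linarith [hstep n, hbound n, abs_nonneg (u 0)]
    exact abs_lt_one_iff.1 (lt_of_mul_lt_mul_left this (by positivity))
  set K := (2 * B).toNat
  have hK : 2 * B ≤ K := Int.self_le_toNat _
  have := h (K + 1)
  rw [hvanish K (by omega), hvanish (K + 1) (by push_cast; omega)] at this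
  simpa using this.symm

theorem Module.Free.eq_zero_of_forall_eq_add_smul_succ {M : Type*} [AddCommGroup M]
    [Module.Free ℤ M] {f : ℕ → M} {a : M} (h : ∀ n : ℕ, f n = a + ((n : ℤ) + 1) • f (n + 1)) :
    a = 0 := by
  let b := Module.Free.chooseBasis ℤ M
  refine b.forall_coord_eq_zero_iff.1 fun i =>
    Int.eq_zero_of_forall_eq_add_mul_succ (u := fun n => b.coord i (f n)) fun n => ?_
  rw [h n, map_add, map_zsmul, smul_eq_mul]

theorem Aleph1Free.eq_zero_of_forall_eq_add_smul_succ {A : Type} [AddCommGroup A]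
    (hA : Aleph1Free A) {f : ℕ → A} {a : A}
    (h : ∀ n : ℕ, f n = a + ((n : ℤ) + 1) • f (n + 1)) : a = 0 := by
  let N := Submodule.span ℤ (Set.range f)
  have : Module.Free ℤ N := hA N ⟨_, Set.countable_range f, rfl⟩
  have hf (n : ℕ) : f n ∈ N := Submodule.subset_span ⟨n, rfl⟩
  have ha : a ∈ N := by
    simpa [h 0] using N.sub_mem (hf 0) (hf 1)
  have := Module.Free.eq_zero_of_forall_eq_add_smul_succ
    (f := fun n => (⟨f n, hf n⟩ : N)) (a := ⟨a, ha⟩) fun n => Subtype.ext (h n)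
  simpa using congrArg Subtype.val this

namespace RatPresentation

open Finsupp Nat

def rel : (ℕ →₀ ℤ) →ₗ[ℤ] (ℕ →₀ ℤ) :=
  linearCombination ℤ fun n => single n 1 - single (n + 1) ((n : ℤ) + 1)

def toRat : (ℕ →₀ ℤ) →ₗ[ℤ] ℚ :=
  linearCombination ℤ fun n => ((n ! : ℕ) : ℚ)⁻¹

lemma rel_single (n : ℕ) (c : ℤ) :
    rel (single n c) = single n c - single (n + 1) (((n : ℤ) + 1) * c) := by
  simp only [rel, linearCombination_single, smul_sub, smul_single, smul_eq_mul, one_mul,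
    mul_comm c]

lemma rel_apply_zero (x : ℕ →₀ ℤ) : rel x 0 = x 0 := by
  induction x using Finsupp.induction_linear with
  | zero => simp
  | add f g hf hg => simp only [map_add, Finsupp.add_apply, hf, hg]
  | single n c => simp [rel_single, single_apply]

lemma rel_apply_succ (x : ℕ →₀ ℤ) (m : ℕ) :
    rel x (m + 1) = x (m + 1) - ((m : ℤ) + 1) * x m := by
  induction x using Finsupp.induction_linear with
  | zero => simp
  | add f g hf hg => simp only [map_add, Finsupp.add_apply, hf, hg]; ring
  | single n c =>
    rcases eq_or_ne n m with rfl | hnm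
    · simp [rel_single]
    · simp [rel_single, single_apply, hnm.symm]

lemma rel_injective : Function.Injective rel := by
  refine (injective_iff_map_eq_zero rel).2 fun x hx => Finsupp.ext fun m => ?_
  induction m with
  | zero => simpa [hx, eq_comm] using rel_apply_zero x
  | succ m ih => simpa [hx, ih, eq_comm] using rel_apply_succ x m

lemma toRat_single (n : ℕ) (c : ℤ) : toRat (single n c) = c / (n ! : ℚ) := by
  simp [toRat, div_eq_mul_inv]

lemma toRat_comp_rel : toRat ∘ₗ rel = 0 := by
  refine Finsupp.lhom_ext fun n c => ?_
  simp only [LinearMap.comp_apply, rel_single, map_sub, toRat_single, LinearMap.zero_apply,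
    factorial_succ]
  push_cast
  field_simp
  ring

lemma toRat_surjective : Function.Surjective toRat := by
  intro q
  obtain ⟨k, hk⟩ : q.den ∣ q.den ! := dvd_factorial q.pos le_rfl
  have hk0 : (k : ℚ) ≠ 0 := by
    rintro h; simp_all [factorial_ne_zero]
  refine ⟨single q.den (q.num * k), ?_⟩
  rw [toRat_single, hk]
  push_cast
  rw [mul_div_mul_right _ _ hk0, Rat.num_div_den]

lemma single_sub_single_mem_range (n : ℕ) (c : ℤ) {N : ℕ} (hN : n ≤ N) :
    ∃ c', single n c - single N c' ∈ LinearMap.range rel := by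
  induction N, hN using Nat.le_induction with
  | base => exact ⟨c, by simp⟩
  | succ N _ ih =>
    obtain ⟨c', hc'⟩ := ih
    refine ⟨((N : ℤ) + 1) * c', ?_⟩
    have hstep : single N c' - single (N + 1) (((N : ℤ) + 1) * c') ∈ LinearMap.range rel :=
      ⟨single N c', rel_single N c'⟩
    simpa using add_mem hc' hstep

lemma exists_sub_single_mem_range (x : ℕ →₀ ℤ) :
    ∃ N c, x - single N c ∈ LinearMap.range rel := by
  induction x using Finsupp.induction_linear with
  | zero => exact ⟨0, 0, by simp⟩
  | single n c => exact ⟨n, c, by simp⟩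
  | add x y hx hy =>
    obtain ⟨N, c, hc⟩ := hx
    obtain ⟨M, d, hd⟩ := hy
    obtain ⟨c', hc'⟩ := single_sub_single_mem_range N c (le_max_left N M)
    obtain ⟨d', hd'⟩ := single_sub_single_mem_range M d (le_max_right N M)
    refine ⟨max N M, c' + d', ?_⟩
    convert add_mem (add_mem hc hc') (add_mem hd hd') using 1
    rw [single_add]; abel

lemma exact_rel_toRat : Function.Exact rel toRat := by
  intro x
  refine ⟨fun hx => ?_, ?_⟩
  · obtain ⟨N, c, hc⟩ := exists_sub_single_mem_range x
    have hc0 : toRat (single N c) = 0 := by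
      obtain ⟨y, hy⟩ := hc
      have := congrArg toRat hy
      rw [← LinearMap.comp_apply, toRat_comp_rel, map_sub, hx] at this
      simpa using this.symm
    rw [toRat_single, div_eq_zero_iff] at hc0
    simp_all [factorial_ne_zero]
  · rintro ⟨y, rfl⟩
    rw [← LinearMap.comp_apply, toRat_comp_rel, LinearMap.zero_apply]

abbrev shortComplex : ShortComplex (ModuleCat.{0} ℤ) :=
  ModuleCat.shortComplexOfCompEqZero rel toRat toRat_comp_rel

lemma shortExact : shortComplex.ShortExact :=
  ModuleCat.shortComplex_shortExact _ exact_rel_toRat rel_injective toRat_surjective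

end RatPresentation

theorem IsCotorsion.exists_comp_rel_eq {A : Type} [AddCommGroup A] (hA : IsCotorsion A)
    (c : (ℕ →₀ ℤ) →ₗ[ℤ] A) : ∃ x : (ℕ →₀ ℤ) →ₗ[ℤ] A, x ∘ₗ RatPresentation.rel = c := by
  obtain ⟨x, hx⟩ := RatPresentation.shortExact.exists_f_comp_eq_of_isZero_ext
    (@ModuleCat.isZero_of_subsingleton _ _ _ hA) (ModuleCat.ofHom c)
  exact ⟨x.hom, congrArg ModuleCat.Hom.hom hx⟩

theorem IsCotorsion.exists_eq_add_smul_succ {A : Type} [AddCommGroup A] (hA : IsCotorsion A)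
    (a : A) : ∃ f : ℕ → A, ∀ n : ℕ, f n = a + ((n : ℤ) + 1) • f (n + 1) := by
  obtain ⟨x, hx⟩ := hA.exists_comp_rel_eq (Finsupp.linearCombination ℤ fun _ => a)
  refine ⟨fun n => x (Finsupp.single n 1), fun n => ?_⟩
  have := LinearMap.congr_fun hx (Finsupp.single n 1)
  rw [LinearMap.comp_apply, RatPresentation.rel_single, mul_one,
    ← Finsupp.smul_single_one (n + 1) ((n : ℤ) + 1),
    map_sub, map_smul, Finsupp.linearCombination_single, one_smul] at this
  rw [← this, sub_add_cancel]

/-- No nonzero `ℵ₁`-free abelian group is cotorsion. -/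
theorem aleph1Free_not_cotorsion (A : Type) [AddCommGroup A]
    (hfree : Aleph1Free A) (hnz : Nontrivial A) : ¬ IsCotorsion A := by
  intro hcot
  obtain ⟨a, ha⟩ := exists_ne (0 : A)
  obtain ⟨f, hf⟩ := hcot.exists_eq_add_smul_succ a
  exact ha (hfree.eq_zero_of_forall_eq_add_smul_succ hf)
end
end

section
/- The Baer-Specker group ℤ^κ (the product of κ copies of ℤ) is ℵ₁-free for every cardinal κ. -/
open Submodule LinearMap

theorem iSupIndep_of_disjoint_iSup_lt {α ι : Type*} [CompleteLattice α] [IsModularLattice α]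
    [IsCompactlyGenerated α] [LinearOrder ι] {f : ι → α}
    (h : ∀ i, Disjoint (f i) (⨆ j < i, f j)) : iSupIndep f := by
  rw [iSupIndep_iff_supIndep]
  intro s
  induction s using Finset.induction_on_max with
  | empty => exact Finset.supIndep_empty f
  | insert a s ha ih =>
    exact ih.insert <| (h a).mono_right <|
      Finset.sup_le fun j hj => le_iSup₂_of_le j (ha j hj) le_rfl

section PID

variable {R M : Type*} [CommRing R] [IsDomain R] [IsPrincipalIdealRing R]
  [AddCommGroup M] [Module R M]

theorem Submodule.exists_isCompl_free_of_isTorsionFree_quotient [Module.Finite R M]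
    (B : Submodule R M) [Module.IsTorsionFree R (M ⧸ B)] :
    ∃ C : Submodule R M, IsCompl B C ∧ Module.Free R C := by
  obtain ⟨σ, hσ⟩ := B.mkQ.exists_rightInverse_of_surjective B.range_mkQ
  have hσ_inj : Function.Injective σ :=
    Function.LeftInverse.injective (g := B.mkQ) fun q => LinearMap.congr_fun hσ q
  have hidem : IsIdempotentElem (σ ∘ₗ B.mkQ) := by
    change (σ ∘ₗ B.mkQ) ∘ₗ (σ ∘ₗ B.mkQ) = σ ∘ₗ B.mkQ
    rw [comp_assoc, ← comp_assoc B.mkQ, hσ, id_comp]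
  have hker : ker (σ ∘ₗ B.mkQ) = B := by
    rw [ker_comp_of_ker_eq_bot _ (ker_eq_bot.mpr hσ_inj), ker_mkQ]
  have hrange : range (σ ∘ₗ B.mkQ) = range σ := range_comp_of_range_eq_top σ B.range_mkQ
  have hcompl := hidem.isCompl
  rw [hker, hrange] at hcompl
  exact ⟨range σ, hcompl.symm, Module.Free.of_equiv (LinearEquiv.ofInjective σ hσ_inj)⟩

theorem Submodule.exists_free_disjoint_sup_eq_of_pure {A B : Submodule R M} (hBA : B ≤ A)
    (hA : A.FG) (hB : ∀ (r : R) (x : M), r ≠ 0 → r • x ∈ B → x ∈ B) :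
    ∃ C : Submodule R M, Module.Free R C ∧ Disjoint B C ∧ B ⊔ C = A := by
  have : Module.Finite R A := Module.Finite.iff_fg.mpr hA
  have : Module.IsTorsionFree R (A ⧸ B.comap A.subtype) := by
    refine .of_smul_eq_zero fun r q hrq => or_iff_not_imp_left.mpr fun hr => ?_
    obtain ⟨x, rfl⟩ := (B.comap A.subtype).mkQ_surjective q
    rw [← map_smul] at hrq
    rw [mkQ_apply, Quotient.mk_eq_zero] at hrq ⊢
    exact hB r x hr hrq
  obtain ⟨C, hBC, hC⟩ := (B.comap A.subtype).exists_isCompl_free_of_isTorsionFree_quotient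
  have hmapB : (B.comap A.subtype).map A.subtype = B := by
    rw [map_comap_subtype, inf_eq_right.mpr hBA]
  refine ⟨C.map A.subtype, Module.Free.of_equiv (C.equivMapOfInjective _ A.injective_subtype),
    ?_, ?_⟩
  · rw [← hmapB]
    exact disjoint_map A.injective_subtype hBC.disjoint
  · rw [← hmapB, ← map_sup, hBC.sup_eq_top, map_top, range_subtype]

theorem Module.free_of_pure_fg_filtration (G : ℕ → Submodule R M) (hG_mono : Monotone G)
    (hG_zero : G 0 = ⊥) (hG_iSup : ⨆ n, G n = ⊤) (hG_fg : ∀ n, (G n).FG)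
    (hG_pure : ∀ n (r : R) (x : M), r ≠ 0 → r • x ∈ G n → x ∈ G n) : Module.Free R M := by
  choose C hC_free hC_disj hC_sup using fun n =>
    exists_free_disjoint_sup_eq_of_pure (hG_mono n.le_succ) (hG_fg (n + 1)) (hG_pure n)
  have hC_partial : ∀ n, ⨆ m < n, C m = G n := by
    intro n
    induction n with
    | zero => simp [hG_zero]
    | succ n ih => rw [Nat.iSup_lt_succ, ih, hC_sup]
  have hC_indep : iSupIndep C :=
    iSupIndep_of_disjoint_iSup_lt fun n => hC_partial n ▸ (hC_disj n).symm
  have hC_top : ⨆ n, C n = ⊤ :=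
    top_le_iff.mp <| hG_iSup ▸ iSup_le fun n => hC_partial n ▸ iSup₂_le_iSup _ _
  have hC_internal := DirectSum.isInternal_submodule_of_iSupIndep_of_iSup_eq_top hC_indep hC_top
  exact Module.Free.of_basis (hC_internal.collectedBasis fun n => Module.Free.chooseBasis R (C n))

end PID

namespace Submodule

variable {R M : Type*} [CommRing R] [AddCommGroup M] [Module R M]

def saturation (p : Submodule R M) : Submodule R M :=
  (torsion R (M ⧸ p)).comap p.mkQ

variable [IsDomain R] {p q : Submodule R M} {x : M}

theorem mem_saturation : x ∈ p.saturation ↔ ∃ r : R, r ≠ 0 ∧ r • x ∈ p := by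
  simp only [saturation, mem_comap, mkQ_apply, mem_torsion_iff, ← Quotient.mk_smul,
    Quotient.mk_eq_zero, Subtype.exists, mem_nonZeroDivisors_iff_ne_zero, Submonoid.mk_smul,
    exists_prop]

theorem le_saturation (p : Submodule R M) : p ≤ p.saturation :=
  fun x hx => mem_saturation.mpr ⟨1, one_ne_zero, by rwa [one_smul]⟩

theorem saturation_mono (h : p ≤ q) : p.saturation ≤ q.saturation := fun _ hx =>
  let ⟨r, hr, hrx⟩ := mem_saturation.mp hx
  mem_saturation.mpr ⟨r, hr, h hrx⟩

theorem mem_saturation_of_smul_mem {r : R} (hr : r ≠ 0) (h : r • x ∈ p.saturation) :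
    x ∈ p.saturation :=
  let ⟨s, hs, hsx⟩ := mem_saturation.mp h
  mem_saturation.mpr ⟨s * r, mul_ne_zero hs hr, by rwa [mul_smul]⟩

theorem saturation_bot [Module.IsTorsionFree R M] : (⊥ : Submodule R M).saturation = ⊥ :=
  eq_bot_iff.mpr fun _ hx =>
    let ⟨_, hr, hrx⟩ := mem_saturation.mp hx
    (smul_eq_zero_iff_right hr).mp hrx

end Submodule

theorem Submodule.exists_finset_eq_zero_of_apply_eq_zero {K ι : Type*} [DivisionRing K]
    (V : Submodule K (ι → K)) [FiniteDimensional K V] :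
    ∃ s : Finset ι, ∀ v ∈ V, (∀ i ∈ s, v i = 0) → v = 0 := by
  classical
  let vanishing (s : Finset ι) : Submodule K V :=
    ⨅ i ∈ s, ker (proj i ∘ₗ V.subtype)
  have mem_vanishing (s : Finset ι) (v : V) : v ∈ vanishing s ↔ ∀ i ∈ s, (v : ι → K) i = 0 := by
    simp [vanishing]
  obtain ⟨_, ⟨s, rfl⟩, hs_min⟩ := IsArtinian.set_has_minimal (Set.range vanishing) ⟨_, ∅, rfl⟩
  refine ⟨s, fun v hv hvs => ?_⟩
  by_contra hv_ne
  obtain ⟨i, hi⟩ := Function.ne_iff.mp hv_ne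
  refine hs_min (vanishing (insert i s)) ⟨_, rfl⟩ (lt_of_le_of_ne ?_ fun h => ?_)
  · intro w hw
    rw [mem_vanishing] at hw ⊢
    exact fun j hj => hw j (Finset.mem_insert_of_mem hj)
  · have hv_mem : (⟨v, hv⟩ : V) ∈ vanishing (insert i s) := h ▸ (mem_vanishing _ _).mpr hvs
    exact hi ((mem_vanishing _ _).mp hv_mem i (Finset.mem_insert_self i s))

theorem Submodule.FG.saturation_pi {R ι : Type*} [CommRing R] [IsDomain R] [IsNoetherianRing R]
    {F : Submodule R (ι → R)} (hF : F.FG) : F.saturation.FG := by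
  let K := FractionRing R
  let c : (ι → R) →ₗ[R] (ι → K) := LinearMap.pi fun i => Algebra.linearMap R K ∘ₗ proj i
  obtain ⟨t, rfl⟩ := hF
  let V := span K (c '' t)
  have : FiniteDimensional K V := FiniteDimensional.span_of_finite K (t.finite_toSet.image c)
  obtain ⟨s, hs⟩ := V.exists_finset_eq_zero_of_apply_eq_zero
  have hc_mem : ∀ y ∈ (span R (t : Set (ι → R))).saturation, c y ∈ V := by
    intro y hy
    obtain ⟨r, hr, hry⟩ := mem_saturation.mp hy
    have hspan : span R t ≤ (V.restrictScalars R).comap c :=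
      span_le.mpr fun x hx => subset_span ⟨x, hx, rfl⟩
    have hr' : algebraMap R K r ≠ 0 := (map_ne_zero_iff _ (IsFractionRing.injective R K)).mpr hr
    have hrcy : algebraMap R K r • c y ∈ V := by
      rw [algebraMap_smul, ← map_smul]
      exact hspan hry
    have := V.smul_mem (algebraMap R K r)⁻¹ hrcy
    rwa [inv_smul_smul₀ hr'] at this
  let π : (ι → R) →ₗ[R] (s → R) := LinearMap.pi fun i => proj (i : ι)
  have hπ_inj : Function.Injective (π ∘ₗ (span R (t : Set (ι → R))).saturation.subtype) := by
    refine (injective_iff_map_eq_zero _).mpr fun ⟨y, hy⟩ hπy => ?_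
    have hcy : c y = 0 := hs _ (hc_mem y hy) fun i hi => by
      simp [c, show y i = 0 from congr_fun hπy ⟨i, hi⟩]
    ext i
    simpa [c] using congr_fun hcy i
  have := isNoetherian_of_injective _ hπ_inj
  exact Module.Finite.iff_fg.mp inferInstance

theorem Submodule.free_span_of_countable_pi {R ι : Type*} [CommRing R] [IsDomain R]
    [IsPrincipalIdealRing R] {S : Set (ι → R)} (hS : S.Countable) : Module.Free R (span R S) := by
  obtain ⟨f, hf⟩ := (hS.insert 0).exists_eq_range (Set.insert_nonempty 0 S)
  set N := span R S
  let F (n : ℕ) : Submodule R (ι → R) := span R (f '' Set.Iio n)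
  have hF_mono : Monotone F := fun m n h => span_mono (Set.image_mono (Set.Iio_subset_Iio h))
  have hF_iSup : ⨆ n, F n = N := by
    rw [← span_iUnion, ← Set.image_iUnion, Set.iUnion_Iio, Set.image_univ, ← hf, span_insert_zero]
  refine Module.free_of_pure_fg_filtration (fun n => (F n).saturation.comap N.subtype)
    (fun m n h => comap_mono (saturation_mono (hF_mono h))) ?_ ?_ ?_ ?_
  · simp [F, saturation_bot]
  · refine eq_top_iff.mpr fun x _ => ?_
    have hx : (x : ι → R) ∈ ⨆ n, F n := hF_iSup.symm ▸ x.2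
    obtain ⟨n, hn⟩ := (mem_iSup_of_directed F hF_mono.directed_le).mp hx
    exact mem_iSup_of_mem n (le_saturation _ hn)
  · exact fun n => fg_of_fg_map_injective N.subtype N.injective_subtype
      ((fg_span ((Set.finite_Iio n).image f)).saturation_pi.of_le (map_comap_le _ _))
  · exact fun n r x hr hrx => mem_saturation_of_smul_mem hr hrx

/-- The Baer-Specker group `ℤ^κ` is `ℵ₁`-free for every cardinal `κ` (i.e. for every
index type `ι`). -/
theorem baerSpecker_aleph1Free : ∀ ι : Type, Aleph1Free (ι → ℤ) := by
  rintro ι N ⟨S, hS, rfl⟩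
  exact Submodule.free_span_of_countable_pi hS
end

section
/- The class D of all flat Mittag-Leffler abelian groups (equivalently, ℵ₁-free abelian groups) is not precovering: there exists an abelian group (namely ℚ) that admits no D-precover. -/
open Submodule Set Nat Filter Topology

noncomputable section

theorem linearIndependent_of_pivots {ι R M N T : Type*} [Ring R] [IsDomain R] [AddCommGroup M]
    [Module R M] [AddCommGroup N] [Module R N] [Module.IsTorsionFree R N] [LinearOrder T]
    {v : ι → M} (f : ι → M →ₗ[R] N) (ρ : ι → T) (hdiag : ∀ i, f i (v i) ≠ 0)
    (htri : ∀ i j, j ≠ i → f i (v j) ≠ 0 → ρ j < ρ i) : LinearIndependent R v := by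
  classical
  rw [linearIndependent_iff']
  intro s g hsum i hi
  by_contra hgi
  obtain ⟨m, hm, hmin⟩ := (s.filter (g · ≠ 0)).exists_min_image ρ ⟨i, by simp [hi, hgi]⟩
  rw [Finset.mem_filter] at hm
  have hvanish : ∀ j ∈ s, j ≠ m → f m (g j • v j) = 0 := by
    intro j hj hjm
    by_cases hgj : g j = 0
    · rw [hgj, zero_smul, map_zero]
    by_contra hne
    rw [map_smul] at hne
    exact (hmin j (Finset.mem_filter.2 ⟨hj, hgj⟩)).not_gt (htri m j hjm (right_ne_zero_of_smul hne))
  have hpivot := congrArg (f m) hsum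
  rw [map_sum, map_zero, Finset.sum_eq_single_of_mem m hm.1 hvanish, map_smul] at hpivot
  exact hm.2 ((smul_eq_zero.1 hpivot).resolve_right (hdiag m))

namespace Submodule

variable {R : Type*} [CommRing R] (P : Submodule R (ℕ →₀ R))

def truncation (k : ℕ) : Submodule R (ℕ →₀ R) := P ⊓ Finsupp.supported R R (Iio k)

theorem apply_eq_zero_of_mem_truncation {k j : ℕ} {x : ℕ →₀ R} (hx : x ∈ P.truncation k)
    (hj : k ≤ j) : x j = 0 :=
  Finsupp.notMem_support_iff.1 fun h => ((Finsupp.mem_supported R x).1 hx.2 h : j < k).not_ge hj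

theorem mem_truncation_of_apply_eq_zero {k : ℕ} {x : ℕ →₀ R} (hx : x ∈ P.truncation (k + 1))
    (hk : x k = 0) : x ∈ P.truncation k := by
  refine ⟨hx.1, (Finsupp.mem_supported R x).2 fun j hj => ?_⟩
  have hjk : j < k + 1 := (Finsupp.mem_supported R x).1 hx.2 hj
  exact lt_of_le_of_ne (Nat.lt_succ_iff.1 hjk) fun h => Finsupp.mem_support_iff.1 hj (h ▸ hk)

def leadingIdeal (k : ℕ) : Ideal R := (P.truncation (k + 1)).map (Finsupp.lapply k)

variable [IsPrincipalIdealRing R]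

theorem exists_mem_truncation_apply_eq_generator (k : ℕ) :
    ∃ w ∈ P.truncation (k + 1), w k = IsPrincipal.generator (P.leadingIdeal k) :=
  IsPrincipal.generator_mem (P.leadingIdeal k)

def leadingElement (k : ℕ) : ℕ →₀ R := (P.exists_mem_truncation_apply_eq_generator k).choose

theorem leadingElement_mem (k : ℕ) : P.leadingElement k ∈ P.truncation (k + 1) :=
  (P.exists_mem_truncation_apply_eq_generator k).choose_spec.1

theorem leadingElement_apply_self (k : ℕ) :
    P.leadingElement k k = IsPrincipal.generator (P.leadingIdeal k) :=
  (P.exists_mem_truncation_apply_eq_generator k).choose_spec.2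

def pivotIndices : Set ℕ := {k | IsPrincipal.generator (P.leadingIdeal k) ≠ 0}

theorem linearIndependent_leadingElement [IsDomain R] :
    LinearIndependent R fun k : P.pivotIndices => P.leadingElement k := by
  refine linearIndependent_of_pivots (fun k => Finsupp.lapply (k : ℕ))
    (fun k => OrderDual.toDual (k : ℕ)) (fun k => ?_) fun i j hji hij => ?_
  · rw [Finsupp.lapply_apply, leadingElement_apply_self]
    exact k.2
  · refine lt_of_le_of_ne (OrderDual.toDual_le_toDual.2 ?_) fun h => hji (Subtype.ext h)
    by_contra hlt
    exact hij (P.apply_eq_zero_of_mem_truncation (P.leadingElement_mem j) (not_le.1 hlt))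

theorem truncation_le_span_leadingElement (k : ℕ) :
    P.truncation k ≤ span R (range fun k : P.pivotIndices => P.leadingElement k) := by
  induction k with
  | zero =>
    intro x hx
    have : x = 0 := by
      simpa using (Finsupp.mem_supported R x).1 hx.2
    simp [this]
  | succ k ih =>
    intro x hx
    obtain ⟨c, hc⟩ := (IsPrincipal.mem_iff_eq_smul_generator (P.leadingIdeal k)).1 ⟨x, hx, rfl⟩
    rw [Finsupp.lapply_apply, smul_eq_mul] at hc
    by_cases hk : k ∈ P.pivotIndices
    · have hw := P.leadingElement_mem k
      have hrest : x - c • P.leadingElement k ∈ P.truncation k :=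
        P.mem_truncation_of_apply_eq_zero (sub_mem hx (smul_mem _ c hw)) (by
          simp [leadingElement_apply_self, hc])
      rw [← sub_add_cancel x (c • P.leadingElement k)]
      exact add_mem (ih hrest) (smul_mem _ c (subset_span ⟨⟨k, hk⟩, rfl⟩))
    · refine ih (P.mem_truncation_of_apply_eq_zero hx ?_)
      rw [hc, not_not.1 hk, mul_zero]

theorem span_leadingElement :
    span R (range fun k : P.pivotIndices => P.leadingElement k) = P := by
  refine le_antisymm (span_le.2 ?_) fun x hx => ?_
  · rintro _ ⟨k, rfl⟩
    exact (P.leadingElement_mem k).1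
  · obtain ⟨k, hk⟩ := x.support.exists_nat_subset_range
    refine P.truncation_le_span_leadingElement k ⟨hx, (Finsupp.mem_supported R x).2 ?_⟩
    exact fun j hj => Finset.mem_range.1 (hk hj)

theorem free_of_finsupp_nat [IsDomain R] : Module.Free R P :=
  have := Module.Free.of_basis (Module.Basis.span P.linearIndependent_leadingElement)
  Module.Free.of_equiv (LinearEquiv.ofEq _ _ P.span_leadingElement)

end Submodule

theorem Submodule.free_of_le_span_of_countable {R M ι : Type*} [CommRing R] [IsDomain R]
    [IsPrincipalIdealRing R] [AddCommGroup M] [Module R M] [Countable ι] {v : ι → M}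
    (hv : LinearIndependent R v) {N : Submodule R M} (hN : N ≤ span R (range v)) :
    Module.Free R N := by
  obtain ⟨e, he⟩ := exists_injective_nat ι
  let F : span R (range v) →ₗ[R] ℕ →₀ R :=
    Finsupp.lmapDomain R R e ∘ₗ (Module.Basis.span hv).repr.toLinearMap
  have hF : Function.Injective F :=
    (Finsupp.mapDomain_injective he).comp (Module.Basis.span hv).repr.injective
  let N' := N.comap (span R (range v)).subtype
  have := (N'.map F).free_of_finsupp_nat
  exact Module.Free.of_equiv
    ((comapSubtypeEquivOfLe hN).symm.trans (N'.equivMapOfInjective F hF)).symm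

theorem Int.eq_zero_of_forall_factorial_dvd {z : ℤ} (h : ∀ n : ℕ, (n ! : ℤ) ∣ z) : z = 0 :=
  Int.eq_zero_of_dvd_of_natAbs_lt_natAbs (h (z.natAbs + 1)) <| by
    rw [Int.natAbs_natCast]
    exact Nat.lt_of_lt_of_le (Nat.lt_succ_self _) (Nat.self_le_factorial _)

theorem Module.Free.eq_zero_of_forall_factorial_dvd {M : Type*} [AddCommGroup M] [Module ℤ M]
    [Module.Free ℤ M] {b : M} (h : ∀ n : ℕ, ∃ z : M, b = n ! • z) : b = 0 := by
  let β := Module.Free.chooseBasis ℤ M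
  refine β.repr.injective (Finsupp.ext fun i => ?_)
  rw [map_zero, Finsupp.zero_apply]
  refine Int.eq_zero_of_forall_factorial_dvd fun n => ?_
  obtain ⟨z, rfl⟩ := h n
  exact ⟨β.repr z i, by simp⟩

theorem Aleph1Free.eq_zero_of_forall_factorial_dvd {A : Type} [AddCommGroup A] [Module ℤ A]
    (hA : Aleph1Free A) {b : A} (h : ∀ n : ℕ, ∃ z : A, b = n ! • z) : b = 0 := by
  choose z hz using h
  let N := span ℤ (insert b (range z))
  have := hA N ⟨_, (countable_range z).insert b, rfl⟩
  have hzN : ∀ n, z n ∈ N := fun n => subset_span (mem_insert_of_mem _ ⟨n, rfl⟩)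
  have : (⟨b, subset_span (mem_insert b _)⟩ : N) = 0 :=
    Module.Free.eq_zero_of_forall_factorial_dvd fun n => ⟨⟨z n, hzN n⟩, Subtype.ext (hz n)⟩
  exact congrArg Subtype.val this

section Tree

open Classical

variable {α : Type*}

def branchPrefix (ν : ℕ → α) (k : ℕ) : List α := List.ofFn fun i : Fin k => ν i

@[simp] theorem length_branchPrefix (ν : ℕ → α) (k : ℕ) : (branchPrefix ν k).length = k := by
  simp [branchPrefix]

theorem branchPrefix_succ (ν : ℕ → α) (k : ℕ) :
    branchPrefix ν (k + 1) = branchPrefix ν k ++ [ν k] := by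
  rw [branchPrefix, List.ofFn_succ_last]
  simp [branchPrefix]

theorem level_eq_of_branchPrefix_eq {ν μ : ℕ → α} {k j : ℕ}
    (h : branchPrefix ν k = branchPrefix μ j) : k = j := by
  simpa using congrArg List.length h

theorem branchPrefix_eq_iff {ν μ : ℕ → α} {k : ℕ} :
    branchPrefix ν k = branchPrefix μ k ↔ ∀ i < k, ν i = μ i := by
  simp [branchPrefix, List.ofFn_inj, funext_iff, Fin.forall_iff]

theorem eventually_branchPrefix_ne {ν μ : ℕ → α} (h : ν ≠ μ) :
    ∀ᶠ k in atTop, branchPrefix ν k ≠ branchPrefix μ k := by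
  obtain ⟨d, hd⟩ := Function.ne_iff.1 h
  exact eventually_atTop.2 ⟨d + 1, fun k hk hνμ => hd (branchPrefix_eq_iff.1 hνμ d (by omega))⟩

theorem branchPrefix_getD_length [Nonempty α] (t : List α) :
    branchPrefix (fun i => t.getD i (Classical.arbitrary α)) t.length = t :=
  List.ext_getElem (by simp) fun i _ hi => by simp [branchPrefix]

-- Valued in `ℚ` rather than `ℤ` only to avoid natural-number division in `k! / n!`.
def branchGen (ν : ℕ → α) (n : ℕ) : List α → ℚ := fun t =>
  if n ≤ t.length ∧ t = branchPrefix ν t.length then (t.length ! / n ! : ℚ) else 0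

def nodeGen (t : List α) : List α → ℚ := Pi.single t 1

theorem branchGen_apply_branchPrefix (ν μ : ℕ → α) (n k : ℕ) :
    branchGen ν n (branchPrefix μ k) =
      if n ≤ k ∧ branchPrefix μ k = branchPrefix ν k then (k ! / n ! : ℚ) else 0 := by
  simp [branchGen]

theorem branchGen_apply_branchPrefix_self (ν : ℕ → α) (n k : ℕ) :
    branchGen ν n (branchPrefix ν k) = if n ≤ k then (k ! / n ! : ℚ) else 0 := by
  simp [branchGen_apply_branchPrefix]

theorem branchGen_apply_of_ne {ν : ℕ → α} {t : List α} (ht : t ≠ branchPrefix ν t.length)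
    (n : ℕ) : branchGen ν n t = 0 := by
  simp [branchGen, ht]

theorem nodeGen_apply (t s : List α) : nodeGen t s = if s = t then 1 else 0 := by
  simp [nodeGen, Pi.single_apply]

theorem branchGen_eq_nodeGen_add (ν : ℕ → α) (k : ℕ) :
    branchGen ν k = nodeGen (branchPrefix ν k) + (k + 1) • branchGen ν (k + 1) := by
  funext t
  simp only [Pi.add_apply, Pi.smul_apply, nodeGen_apply]
  by_cases ht : t = branchPrefix ν t.length
  · rw [ht]
    generalize t.length = L
    simp only [branchGen_apply_branchPrefix_self]
    rcases lt_trichotomy L k with hL | rfl | hL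
    · have hne : branchPrefix ν L ≠ branchPrefix ν k :=
        fun h => hL.ne (level_eq_of_branchPrefix_eq h)
      simp [not_le.2 hL, not_le.2 (hL.trans (lt_succ_self k)), hne]
    · simp [Nat.factorial_ne_zero]
    · have hne : branchPrefix ν L ≠ branchPrefix ν k :=
        fun h => hL.ne' (level_eq_of_branchPrefix_eq h)
      simp only [hL.le, Nat.succ_le_of_lt hL, if_true, hne, if_false, zero_add, nsmul_eq_mul,
        Nat.factorial_succ]
      push_cast
      field_simp
  · have hne : t ≠ branchPrefix ν k := fun h => ht (by rw [h, length_branchPrefix])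
    simp [branchGen_apply_of_ne ht, hne]

def branchSpan (R : Set (ℕ → α)) : Submodule ℤ (List α → ℚ) := span ℤ (image2 branchGen R univ)

variable (α) in
abbrev treeModule : Submodule ℤ (List α → ℚ) := branchSpan univ

theorem branchSpan_mono {R R' : Set (ℕ → α)} (h : R ⊆ R') : branchSpan R ≤ branchSpan R' :=
  span_mono (image2_subset_right h)

theorem branchGen_mem_branchSpan {R : Set (ℕ → α)} {ν : ℕ → α} (hν : ν ∈ R) (n : ℕ) :
    branchGen ν n ∈ branchSpan R :=
  subset_span (mem_image2_of_mem hν (mem_univ n))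

theorem nodeGen_branchPrefix_eq_sub (ν : ℕ → α) (k : ℕ) :
    nodeGen (branchPrefix ν k) = branchGen ν k - (k + 1) • branchGen ν (k + 1) :=
  eq_sub_of_add_eq (branchGen_eq_nodeGen_add ν k).symm

theorem nodeGen_mem_treeModule [Nonempty α] (t : List α) : nodeGen t ∈ treeModule α := by
  rw [← branchPrefix_getD_length t, nodeGen_branchPrefix_eq_sub]
  exact sub_mem (branchGen_mem_branchSpan (mem_univ _) _)
    (nsmul_mem (branchGen_mem_branchSpan (mem_univ _) _) _)

namespace treeModule

def branchElem (ν : ℕ → α) (n : ℕ) : treeModule α :=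
  ⟨branchGen ν n, branchGen_mem_branchSpan (mem_univ ν) n⟩

def nodeElem [Nonempty α] (t : List α) : treeModule α := ⟨nodeGen t, nodeGen_mem_treeModule t⟩

theorem branchElem_zero_eq_sum [Nonempty α] (ν : ℕ → α) (n : ℕ) :
    branchElem ν 0 =
      ∑ j ∈ Finset.range n, j ! • nodeElem (branchPrefix ν j) + n ! • branchElem ν n := by
  induction n with
  | zero => simp
  | succ n ih =>
    have hstep : branchElem ν n = nodeElem (branchPrefix ν n) + (n + 1) • branchElem ν (n + 1) :=
      Subtype.ext (branchGen_eq_nodeGen_add ν n)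
    rw [ih, hstep, Finset.sum_range_succ, smul_add, smul_smul, add_assoc, Nat.factorial_succ,
      mul_comm]

end treeModule

def branchLimit (ν : ℕ → α) (x : List α → ℚ) : ℚ :=
  limUnder atTop fun n => x (branchPrefix ν n) / n !

variable (α) in
def branchConvergent : Submodule ℤ (List α → ℚ) where
  carrier := {x | ∃ a : (ℕ → α) → ℚ, a.support.Finite ∧
    ∀ ν, Tendsto (fun n => x (branchPrefix ν n) / n !) atTop (𝓝 (a ν))}
  zero_mem' := ⟨0, by simp, fun ν => by simp⟩
  add_mem' := by
    rintro x y ⟨a, ha, hx⟩ ⟨b, hb, hy⟩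
    refine ⟨a + b, (ha.union hb).subset (Function.support_add _ _), fun ν => ?_⟩
    simpa [add_div] using (hx ν).add (hy ν)
  smul_mem' := by
    rintro c x ⟨a, ha, hx⟩
    refine ⟨c • a, ha.subset (Function.support_smul_subset_right _ _), fun ν => ?_⟩
    simpa [zsmul_eq_mul, mul_div_assoc] using (hx ν).const_mul (c : ℚ)

theorem tendsto_branchLimit {x : List α → ℚ} (hx : x ∈ branchConvergent α) (ν : ℕ → α) :
    Tendsto (fun n => x (branchPrefix ν n) / n !) atTop (𝓝 (branchLimit ν x)) := by
  obtain ⟨a, -, ha⟩ := hx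
  rw [branchLimit, (ha ν).limUnder_eq]
  exact ha ν

theorem finite_support_branchLimit {x : List α → ℚ} (hx : x ∈ branchConvergent α) :
    (fun ν => branchLimit ν x).support.Finite := by
  obtain ⟨a, hfin, ha⟩ := hx
  simpa [branchLimit, fun ν => (ha ν).limUnder_eq] using hfin

theorem branchLimit_add {x y : List α → ℚ} (hx : x ∈ branchConvergent α)
    (hy : y ∈ branchConvergent α) (ν : ℕ → α) :
    branchLimit ν (x + y) = branchLimit ν x + branchLimit ν y := by
  refine Tendsto.limUnder_eq ?_
  simpa [add_div] using (tendsto_branchLimit hx ν).add (tendsto_branchLimit hy ν)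

theorem tendsto_branchGen (ν μ : ℕ → α) (n : ℕ) :
    Tendsto (fun k => branchGen ν n (branchPrefix μ k) / k !) atTop
      (𝓝 (if μ = ν then (1 / n ! : ℚ) else 0)) := by
  refine tendsto_const_nhds.congr' ?_
  by_cases hμ : μ = ν
  · subst hμ
    filter_upwards [eventually_ge_atTop n] with k hk
    rw [branchGen_apply_branchPrefix_self, if_pos hk, if_pos rfl]
    field_simp
  · filter_upwards [eventually_branchPrefix_ne hμ] with k hk
    simp [branchGen_apply_branchPrefix, hk, hμ]

theorem branchLimit_branchGen (ν μ : ℕ → α) (n : ℕ) :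
    branchLimit μ (branchGen ν n) = if μ = ν then (1 / n ! : ℚ) else 0 :=
  (tendsto_branchGen ν μ n).limUnder_eq

theorem treeModule_le_branchConvergent : treeModule α ≤ branchConvergent α := by
  refine span_le.2 ?_
  rintro _ ⟨ν, -, n, -, rfl⟩
  refine ⟨fun μ => if μ = ν then (1 / n ! : ℚ) else 0, (finite_singleton ν).subset fun μ hμ => ?_,
    fun μ => tendsto_branchGen ν μ n⟩
  by_contra h
  exact hμ (if_neg h)

def weightedBranchLimit (c : (ℕ → α) → ℚ) : treeModule α →+ ℚ :=
  AddMonoidHom.mk' (fun x => ∑ᶠ ν, c ν * branchLimit ν x) fun x y => by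
    have hx := treeModule_le_branchConvergent x.2
    have hy := treeModule_le_branchConvergent y.2
    simp only [Submodule.coe_add, branchLimit_add hx hy, mul_add]
    exact finsum_add_distrib
      ((finite_support_branchLimit hx).subset (Function.support_mul_subset_right _ _))
      ((finite_support_branchLimit hy).subset (Function.support_mul_subset_right _ _))

theorem weightedBranchLimit_branchElem_zero (c : (ℕ → α) → ℚ) (ν : ℕ → α) :
    weightedBranchLimit c (treeModule.branchElem ν 0) = c ν := by
  simp only [weightedBranchLimit, AddMonoidHom.mk'_apply, treeModule.branchElem,
    branchLimit_branchGen]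
  rw [finsum_eq_single _ ν fun μ hμ => by simp [hμ]]
  simp

end Tree

section TreeBasis

open Classical

variable {α : Type*} (R : Set (ℕ → α)) (enc : (ℕ → α) → ℕ)

def freshLevel (ν : ℕ → α) : ℕ :=
  sInf {m | ∀ k ≥ m, ∀ μ ∈ R, enc μ < enc ν → branchPrefix ν k ≠ branchPrefix μ k}

def freshNodes : Set (List α) :=
  {t | ∃ ν ∈ R, ∃ k, freshLevel R enc ν ≤ k ∧ t = branchPrefix ν k}

def stemNodes : Set (List α) := {t | ∃ ν ∈ R, ∃ k, t = branchPrefix ν k} \ freshNodes R enc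

abbrev TreeBasisIndex := R × ℕ ⊕ stemNodes R enc

def treeBasis : TreeBasisIndex R enc → List α → ℚ :=
  Sum.elim (fun p => branchGen p.1 (freshLevel R enc p.1 + p.2)) fun t => nodeGen t

def treeBasisPivot : TreeBasisIndex R enc → List α :=
  Sum.elim (fun p => branchPrefix p.1 (freshLevel R enc p.1 + p.2)) fun t => t

variable {R enc}

theorem branchPrefix_ne_of_freshLevel_le (hR : InjOn enc R) {ν μ : ℕ → α} (hμ : μ ∈ R)
    (hlt : enc μ < enc ν) {k : ℕ} (hk : freshLevel R enc ν ≤ k) :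
    branchPrefix ν k ≠ branchPrefix μ k := by
  have hfin : {μ ∈ R | enc μ < enc ν}.Finite :=
    Finite.of_finite_image ((finite_Iio (enc ν)).subset (image_subset_iff.2 fun μ h => h.2))
      (hR.mono fun μ h => h.1)
  obtain ⟨m, hm⟩ := eventually_atTop.1 <| (eventually_all_finite hfin
    (p := fun μ k => branchPrefix ν k ≠ branchPrefix μ k)).2 fun μ h =>
      eventually_branchPrefix_ne fun e => h.2.ne' (congrArg enc e)
  exact Nat.sInf_mem (s := {m | ∀ k ≥ m, ∀ μ ∈ R, enc μ < enc ν → _})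
    ⟨m, fun k hk μ hμ h => hm k hk μ ⟨hμ, h⟩⟩ k hk μ hμ hlt

theorem eq_of_branchPrefix_eq_of_freshLevel_le (hR : InjOn enc R) {ν μ : ℕ → α} (hν : ν ∈ R)
    (hμ : μ ∈ R) {k j : ℕ} (hk : freshLevel R enc ν ≤ k) (hj : freshLevel R enc μ ≤ j)
    (h : branchPrefix ν k = branchPrefix μ j) : ν = μ := by
  obtain rfl := level_eq_of_branchPrefix_eq h
  rcases lt_trichotomy (enc μ) (enc ν) with hlt | heq | hlt
  · exact absurd h (branchPrefix_ne_of_freshLevel_le hR hμ hlt hk)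
  · exact hR hν hμ heq.symm
  · exact absurd h.symm (branchPrefix_ne_of_freshLevel_le hR hν hlt hj)

theorem linearIndependent_treeBasis (hR : InjOn enc R) :
    LinearIndependent ℤ (treeBasis R enc) := by
  refine linearIndependent_of_pivots
    (fun i => (LinearMap.proj (treeBasisPivot R enc i) : (List α → ℚ) →ₗ[ℤ] ℚ))
    (Sum.elim (fun p => (p.2 : WithTop ℕ)) fun _ => ⊤) ?_ ?_
  · rintro (⟨ν, k⟩ | t)
    · simp [treeBasis, treeBasisPivot, branchGen_apply_branchPrefix_self, Nat.factorial_ne_zero]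
    · simp [treeBasis, treeBasisPivot, nodeGen_apply]
  · rintro (⟨ν, k⟩ | t) (⟨μ, k'⟩ | t') hji hne <;>
      simp only [treeBasis, treeBasisPivot, Sum.elim_inl, Sum.elim_inr, LinearMap.proj_apply,
        branchGen_apply_branchPrefix, nodeGen_apply] at hne ⊢
    · obtain ⟨hle, hpre⟩ := (ite_ne_right_iff.1 hne).1
      obtain rfl : μ = ν := Subtype.ext (eq_of_branchPrefix_eq_of_freshLevel_le hR ν.2 μ.2
        (Nat.le_add_right _ _) (by omega) hpre).symm
      have hlt : k' < k := lt_of_le_of_ne (by omega) fun h => hji (by rw [h])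
      exact_mod_cast hlt
    · exact absurd ⟨ν, ν.2, _, Nat.le_add_right _ _, (ite_ne_right_iff.1 hne).1.symm⟩ t'.2.2
    · exact WithTop.coe_lt_top _
    · exact absurd (congrArg Sum.inr (Subtype.ext (ite_ne_right_iff.1 hne).1.symm)) hji

theorem branchGen_mem_span_treeBasis {ν : ℕ → α} (hν : ν ∈ R) {k : ℕ}
    (hk : freshLevel R enc ν ≤ k) : branchGen ν k ∈ span ℤ (range (treeBasis R enc)) :=
  subset_span
    ⟨.inl (⟨ν, hν⟩, k - freshLevel R enc ν), by simp [treeBasis, Nat.add_sub_cancel' hk]⟩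

theorem nodeGen_branchPrefix_mem_span_treeBasis {ν : ℕ → α} (hν : ν ∈ R) (k : ℕ) :
    nodeGen (branchPrefix ν k) ∈ span ℤ (range (treeBasis R enc)) := by
  by_cases hfresh : branchPrefix ν k ∈ freshNodes R enc
  · obtain ⟨μ, hμ, j, hj, hνμ⟩ := hfresh
    rw [hνμ, nodeGen_branchPrefix_eq_sub]
    exact sub_mem (branchGen_mem_span_treeBasis hμ hj)
      (nsmul_mem (branchGen_mem_span_treeBasis hμ (hj.trans (Nat.le_succ j))) _)
  · exact subset_span ⟨.inr ⟨_, ⟨ν, hν, k, rfl⟩, hfresh⟩, rfl⟩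

theorem branchSpan_le_span_treeBasis : branchSpan R ≤ span ℤ (range (treeBasis R enc)) := by
  refine span_le.2 ?_
  rintro _ ⟨ν, hν, n, -, rfl⟩
  suffices ∀ d n, freshLevel R enc ν ≤ n + d →
      branchGen ν n ∈ span ℤ (range (treeBasis R enc)) from this _ n (Nat.le_add_left _ _)
  intro d
  induction d with
  | zero => exact fun n hn => branchGen_mem_span_treeBasis hν hn
  | succ d ih =>
    intro n hn
    rw [branchGen_eq_nodeGen_add]
    exact add_mem (nodeGen_branchPrefix_mem_span_treeBasis hν n)
      (nsmul_mem (ih (n + 1) (by omega)) _)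

theorem countable_treeBasisIndex (hR : R.Countable) : Countable (TreeBasisIndex R enc) := by
  have := hR.to_subtype
  have : (stemNodes R enc).Countable :=
    (hR.biUnion fun ν _ => countable_range (branchPrefix ν)).mono <| by
      rintro _ ⟨⟨ν, hν, k, rfl⟩, -⟩
      exact mem_biUnion hν ⟨k, rfl⟩
  have := this.to_subtype
  infer_instance

theorem free_of_le_branchSpan {R : Set (ℕ → α)} (hR : R.Countable)
    {N : Submodule ℤ (List α → ℚ)} (hN : N ≤ branchSpan R) : Module.Free ℤ N := by
  obtain ⟨enc, henc⟩ := countable_iff_exists_injOn.1 hR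
  have := countable_treeBasisIndex (enc := enc) hR
  exact free_of_le_span_of_countable (linearIndependent_treeBasis henc)
    (hN.trans branchSpan_le_span_treeBasis)

end TreeBasis

theorem exists_countable_of_mem_treeModule {α : Type*} {x : List α → ℚ}
    (hx : x ∈ treeModule α) : ∃ R : Set (ℕ → α), R.Countable ∧ x ∈ branchSpan R := by
  induction hx using Submodule.span_induction with
  | mem x hx =>
    obtain ⟨ν, -, n, -, rfl⟩ := hx
    exact ⟨{ν}, countable_singleton ν, branchGen_mem_branchSpan (mem_singleton ν) n⟩
  | zero => exact ⟨∅, countable_empty, zero_mem _⟩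
  | add x y _ _ hx hy =>
    obtain ⟨R, hR, hxR⟩ := hx
    obtain ⟨R', hR', hyR'⟩ := hy
    refine ⟨R ∪ R', hR.union hR', add_mem ?_ ?_⟩
    · exact branchSpan_mono subset_union_left hxR
    · exact branchSpan_mono subset_union_right hyR'
  | smul c x _ hx =>
    obtain ⟨R, hR, hxR⟩ := hx
    exact ⟨R, hR, smul_mem _ c hxR⟩

theorem aleph1Free_treeModule {α : Type} : Aleph1Free (treeModule α) := by
  rintro N ⟨S, hS, rfl⟩
  have := hS.to_subtype
  choose R hRc hxR using fun x : S => exists_countable_of_mem_treeModule x.1.2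
  have hle : (span ℤ S).map (treeModule α).subtype ≤ branchSpan (⋃ x, R x) := by
    rw [map_span, span_le]
    rintro _ ⟨x, hx, rfl⟩
    exact branchSpan_mono (subset_iUnion R ⟨x, hx⟩) (hxR ⟨x, hx⟩)
  have := free_of_le_branchSpan (countable_iUnion hRc) hle
  exact Module.Free.of_equiv ((span ℤ S).equivMapOfInjective _ (injective_subtype _)).symm

section Diagonal

variable {B : Type} [AddCommGroup B]

def seriesLimits (ν : ℕ → B) : Set B :=
  {b | ∀ n, ∃ z, b = ∑ k ∈ Finset.range n, k ! • ν k + n ! • z}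

theorem Aleph1Free.subsingleton_seriesLimits (hB : Aleph1Free B) (ν : ℕ → B) :
    (seriesLimits ν).Subsingleton := by
  intro b hb b' hb'
  refine sub_eq_zero.1 (hB.eq_zero_of_forall_factorial_dvd fun n => ?_)
  obtain ⟨z, hz⟩ := hb n
  obtain ⟨z', hz'⟩ := hb' n
  exact ⟨z - z', by rw [hz, hz', smul_sub]; abel⟩

open Classical in
def precoverWeight (f : B →ₗ[ℤ] ℚ) (ν : ℕ → B) : ℚ :=
  if h : (seriesLimits ν).Nonempty then f h.some + 1 else 0

theorem precoverWeight_eq (hB : Aleph1Free B) (f : B →ₗ[ℤ] ℚ) {ν : ℕ → B} {b : B}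
    (hb : b ∈ seriesLimits ν) : precoverWeight f ν = f b + 1 := by
  have hne : (seriesLimits ν).Nonempty := ⟨b, hb⟩
  rw [precoverWeight, dif_pos hne, hB.subsingleton_seriesLimits ν hne.some_mem hb]

variable (h : treeModule B →ₗ[ℤ] B)

def diagonalPrefix : ℕ → List B
  | 0 => []
  | n + 1 => diagonalPrefix n ++ [h (treeModule.nodeElem (diagonalPrefix n))]

def diagonalBranch (n : ℕ) : B := h (treeModule.nodeElem (diagonalPrefix h n))

theorem branchPrefix_diagonalBranch (n : ℕ) :
    branchPrefix (diagonalBranch h) n = diagonalPrefix h n := by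
  induction n with
  | zero => rfl
  | succ n ih => rw [branchPrefix_succ, ih, diagonalBranch, diagonalPrefix]

theorem apply_branchElem_zero_mem_seriesLimits :
    h (treeModule.branchElem (diagonalBranch h) 0) ∈ seriesLimits (diagonalBranch h) := by
  intro n
  refine ⟨h (treeModule.branchElem (diagonalBranch h) n), ?_⟩
  rw [treeModule.branchElem_zero_eq_sum _ n, map_add, map_sum, map_nsmul]
  simp only [map_nsmul, branchPrefix_diagonalBranch, diagonalBranch]

end Diagonal

/-- The class of `ℵ₁`-free (= flat Mittag-Leffler) abelian groups is not precovering: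
`ℚ` admits no precover by this class. -/
theorem aleph1Free_not_precovering :
    ¬ ∃ (B : Type) (_ : AddCommGroup B) (f : B →ₗ[ℤ] ℚ), Aleph1Free B ∧
      ∀ (G : Type) (_ : AddCommGroup G), Aleph1Free G →
        ∀ g : G →ₗ[ℤ] ℚ, ∃ h : G →ₗ[ℤ] B, f ∘ₗ h = g := by
  rintro ⟨B, _, f, hB, hprecover⟩
  obtain ⟨h, hfh⟩ := hprecover (treeModule B) inferInstance aleph1Free_treeModule
    (weightedBranchLimit (precoverWeight f)).toIntLinearMap
  have hweight := precoverWeight_eq hB f (apply_branchElem_zero_mem_seriesLimits h)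
  have hvalue := LinearMap.congr_fun hfh (treeModule.branchElem (diagonalBranch h) 0)
  rw [LinearMap.comp_apply, AddMonoidHom.coe_toIntLinearMap, weightedBranchLimit_branchElem_zero,
    hweight] at hvalue
  linarith
end
end
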